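/- Let $X$ be a compact metric space and $f:X\to X$ a continuous map. For every $x\in X$, $i\ge0$ and $m\ge1$, it holds that $f^i(\overline{\omega}(x,f^m))=\overline{\omega}(f^i(x),f^m)$. -/

import Mathlib

/-! Iterates of `f^[m]` along the orbit of `f^[i] x` are the images under `f^[i]` of those
along the orbit of `x`, so it suffices to show `g '' ω̄(s) = ω̄(g ∘ s)` for every sequence `s` and
continuous `g`. The inclusion `⊆` is uniform continuity of `g`. For `⊇`, if `z ∈ ω̄(g ∘ s)`, the
times at which `g (s i)` is `ε`-close to `z` have positive upper density and `s` visits the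
compact set `g ⁻¹' closedBall z ε` at those times; as upper density is finitely subadditive, a
finite cover of that set by balls shows it meets `ω̄(s)`. Hence `z` lies in the closure of the
compact set `g '' ω̄(s)`. -/

open Filter Metric Set
open scoped Classical Topology

noncomputable def upperDensity (A : Set ℕ) : ℝ :=
  Filter.limsup
    (fun n : ℕ => (((Finset.range n).filter (fun i => i ∈ A)).card : ℝ) / n) Filter.atTop

def HasDensityOne (A : Set ℕ) : Prop :=
  Filter.Tendsto
    (fun n : ℕ => (((Finset.range n).filter (fun i => i ∈ A)).card : ℝ) / n) Filter.atTop (nhds 1)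

def omegaBarSeq {X : Type*} [MetricSpace X] (x : ℕ → X) : Set X :=
  {y | ∀ ε > 0, 0 < upperDensity {i | dist (x i) y < ε}}

def omegaBar {X : Type*} [MetricSpace X] (f : X → X) (x : X) : Set X :=
  omegaBarSeq (fun i => f^[i] x)

-- `upperDensity A` is by definition `limsup (densityRatio A) atTop`.
noncomputable def densityRatio (A : Set ℕ) (n : ℕ) : ℝ :=
  (((Finset.range n).filter (fun i => i ∈ A)).card : ℝ) / n

lemma densityRatio_nonneg (A : Set ℕ) (n : ℕ) : 0 ≤ densityRatio A n := by
  unfold densityRatio; positivity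

lemma densityRatio_le_one (A : Set ℕ) (n : ℕ) : densityRatio A n ≤ 1 :=
  div_le_one_of_le₀ (mod_cast (Finset.card_filter_le _ _).trans (Finset.card_range n).le)
    n.cast_nonneg

lemma densityRatio_mono {A B : Set ℕ} (h : A ⊆ B) (n : ℕ) :
    densityRatio A n ≤ densityRatio B n :=
  div_le_div_of_nonneg_right
    (mod_cast Finset.card_le_card (Finset.monotone_filter_right _ fun _ _ hi ↦ h hi)) n.cast_nonneg

lemma densityRatio_union_le (A B : Set ℕ) (n : ℕ) :
    densityRatio (A ∪ B) n ≤ densityRatio A n + densityRatio B n := by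
  unfold densityRatio
  rw [← add_div]
  refine div_le_div_of_nonneg_right ?_ n.cast_nonneg
  rw [← Nat.cast_add, Nat.cast_le]
  calc _ ≤ (((Finset.range n).filter (· ∈ A)) ∪ (Finset.range n).filter (· ∈ B)).card :=
        Finset.card_le_card fun i hi ↦ by simpa [Finset.mem_union, and_or_left] using hi
    _ ≤ _ := Finset.card_union_le _ _

lemma isBoundedUnder_le_densityRatio (A : Set ℕ) :
    IsBoundedUnder (· ≤ ·) atTop (densityRatio A) :=
  isBoundedUnder_of ⟨1, densityRatio_le_one A⟩

lemma isBoundedUnder_ge_densityRatio (A : Set ℕ) :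
    IsBoundedUnder (· ≥ ·) atTop (densityRatio A) :=
  isBoundedUnder_of ⟨0, densityRatio_nonneg A⟩

lemma upperDensity_mono {A B : Set ℕ} (h : A ⊆ B) : upperDensity A ≤ upperDensity B :=
  limsup_le_limsup (Eventually.of_forall (densityRatio_mono h))
    (isBoundedUnder_ge_densityRatio A).isCoboundedUnder_le (isBoundedUnder_le_densityRatio B)

lemma upperDensity_union_le (A B : Set ℕ) :
    upperDensity (A ∪ B) ≤ upperDensity A + upperDensity B := by
  have hsum_bdd : IsBoundedUnder (· ≤ ·) atTop (densityRatio A + densityRatio B) :=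
    isBoundedUnder_of ⟨1 + 1, fun n ↦
      add_le_add (densityRatio_le_one A n) (densityRatio_le_one B n)⟩
  calc upperDensity (A ∪ B) ≤ limsup (densityRatio A + densityRatio B : ℕ → ℝ) atTop :=
        limsup_le_limsup (Eventually.of_forall (densityRatio_union_le A B))
          (isBoundedUnder_ge_densityRatio _).isCoboundedUnder_le hsum_bdd
    _ ≤ upperDensity A + upperDensity B :=
        limsup_add_le (isBoundedUnder_ge_densityRatio A) (isBoundedUnder_le_densityRatio A)
          (isBoundedUnder_ge_densityRatio B).isCoboundedUnder_le (isBoundedUnder_le_densityRatio B)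

lemma upperDensity_biUnion_le {ι : Type*} (s : Finset ι) (A : ι → Set ℕ) :
    upperDensity (⋃ c ∈ s, A c) ≤ ∑ c ∈ s, upperDensity (A c) := by
  induction s using Finset.induction with
  | empty => simp [upperDensity]
  | insert a s ha ih =>
    rw [Finset.set_biUnion_insert, Finset.sum_insert ha]
    exact (upperDensity_union_le _ _).trans (add_le_add_right ih _)

section OmegaBar

variable {X : Type*} [MetricSpace X]

lemma isClosed_omegaBarSeq (s : ℕ → X) : IsClosed (omegaBarSeq s) := by
  refine isClosed_of_closure_subset fun y hy ε hε ↦ ?_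
  obtain ⟨y', hy', hyy'⟩ := Metric.mem_closure_iff.1 hy (ε / 2) (half_pos hε)
  refine (hy' (ε / 2) (half_pos hε)).trans_le (upperDensity_mono fun i hi ↦ ?_)
  calc dist (s i) y ≤ dist (s i) y' + dist y y' := dist_triangle_right _ _ _
    _ < ε := by linarith [hi.out]

lemma exists_mem_omegaBarSeq_of_upperDensity_pos {s : ℕ → X} {K : Set X} {A : Set ℕ}
    (hK : IsCompact K) (hA : 0 < upperDensity A) (hsA : ∀ i ∈ A, s i ∈ K) :
    ∃ y ∈ K, y ∈ omegaBarSeq s := by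
  by_contra! hnot
  have hsparse : ∀ y ∈ K, ∃ ε > 0, upperDensity {i | dist (s i) y < ε} ≤ 0 := by
    simpa [omegaBarSeq] using hnot
  choose! ε hε hε_sparse using hsparse
  obtain ⟨t, htK, hKt⟩ := hK.elim_nhds_subcover (fun y ↦ ball y (ε y))
    fun y hy ↦ ball_mem_nhds y (hε y hy)
  have hAt : A ⊆ ⋃ y ∈ t, {i | dist (s i) y < ε y} := fun i hi ↦ by
    simpa only [mem_iUnion, mem_ball, Set.mem_ofPred_eq] using hKt (hsA i hi)
  refine hA.not_ge ?_
  calc upperDensity A ≤ ∑ y ∈ t, upperDensity {i | dist (s i) y < ε y} :=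
        (upperDensity_mono hAt).trans (upperDensity_biUnion_le _ _)
    _ ≤ 0 := Finset.sum_nonpos fun y hy ↦ hε_sparse y (htK y hy)

lemma image_omegaBarSeq_subset {g : X → X} (hg : UniformContinuous g) (s : ℕ → X) :
    g '' omegaBarSeq s ⊆ omegaBarSeq (g ∘ s) := by
  rintro _ ⟨y, hy, rfl⟩ ε hε
  obtain ⟨δ, hδ, hδε⟩ := uniformContinuous_iff.1 hg ε hε
  exact (hy δ hδ).trans_le (upperDensity_mono fun i hi ↦ hδε hi)

lemma omegaBarSeq_comp_subset_image [CompactSpace X] {g : X → X} (hg : Continuous g)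
    (s : ℕ → X) : omegaBarSeq (g ∘ s) ⊆ g '' omegaBarSeq s := by
  intro z hz
  have hclosed : IsClosed (g '' omegaBarSeq s) :=
    ((isClosed_omegaBarSeq s).isCompact.image hg).isClosed
  refine hclosed.closure_subset (Metric.mem_closure_iff.2 fun ε hε ↦ ?_)
  obtain ⟨y, hyK, hy⟩ := exists_mem_omegaBarSeq_of_upperDensity_pos
    (isClosed_closedBall.preimage hg).isCompact (hz (ε / 2) (half_pos hε))
    fun i hi ↦ mem_closedBall.2 (le_of_lt hi)
  refine ⟨g y, mem_image_of_mem g hy, ?_⟩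
  rw [dist_comm]
  exact (mem_closedBall.1 hyK).trans_lt (half_lt_self hε)

lemma image_omegaBarSeq_eq [CompactSpace X] {g : X → X} (hg : Continuous g) (s : ℕ → X) :
    g '' omegaBarSeq s = omegaBarSeq (g ∘ s) :=
  (image_omegaBarSeq_subset (CompactSpace.uniformContinuous_of_continuous hg) s).antisymm
    (omegaBarSeq_comp_subset_image hg s)

end OmegaBar

theorem stmt9_general {X : Type*} [MetricSpace X] [CompactSpace X] (f : X → X) (hf : Continuous f)
    (x : X) (i m : ℕ) :
    f^[i] '' omegaBar (f^[m]) x = omegaBar (f^[m]) (f^[i] x) := by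
  have horbit : (fun j ↦ (f^[m])^[j] (f^[i] x)) = f^[i] ∘ fun j ↦ (f^[m])^[j] x := by
    funext j
    simp only [Function.comp_apply, ← Function.iterate_mul, ← Function.iterate_add_apply,
      Nat.add_comm]
  rw [omegaBar, omegaBar, horbit]
  exact image_omegaBarSeq_eq (hf.iterate i) _

theorem stmt9 {X : Type*} [MetricSpace X] [CompactSpace X] (f : X → X) (hf : Continuous f)
    (x : X) (i m : ℕ) (hm : 1 ≤ m) :
    f^[i] '' omegaBar (f^[m]) x = omegaBar (f^[m]) (f^[i] x) :=
  stmt9_general f hf x i m
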